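/- arXiv:2202.03115 — 18 statements merged into one kernel-verified Lean document; each statement's English description precedes it below -/
import Mathlib

section
/- Let $\{D_\alpha : A \to M\}_{\alpha \in \Omega}$ be a derivation family on an associative algebra $A$ with values in an $A$-bimodule $M$, such that each $D_\alpha$ is a linear bijection. Then the family of inverses $\{D_\alpha^{-1} : M \to A\}_{\alpha \in \Omega}$ is an $\mathcal{O}$-operator family, i.e. $D_\alpha^{-1}(u) \cdot D_\beta^{-1}(v) = D_{\alpha\beta}^{-1}(D_\alpha^{-1}(u) \cdot v + u \cdot D_\beta^{-1}(v))$ for all $u,v \in M$ and $\alpha,\beta \in \Omega$. -/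
/-- An invertible derivation family gives an O-operator family via inverses. -/
theorem invertible_derivation_family_inverse_is_O_operator_family
    {k Ω A M : Type*} [Field k] [Semigroup Ω]
    [NonUnitalRing A] [Module k A] [SMulCommClass k A A] [IsScalarTower k A A]
    [AddCommGroup M] [Module k M]
    (l : A →ₗ[k] M →ₗ[k] M) (r : M →ₗ[k] A →ₗ[k] M)
    (hll : ∀ (a b : A) (u : M), l (a * b) u = l a (l b u))
    (hlr : ∀ (a : A) (u : M) (b : A), r (l a u) b = l a (r u b))
    (hrr : ∀ (u : M) (a b : A), r (r u a) b = r u (a * b))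
    (D : Ω → A ≃ₗ[k] M)
    (hD : ∀ (α β : Ω) (a b : A), D (α * β) (a * b) = r (D α a) b + l a (D β b)) :
    ∀ (α β : Ω) (u v : M),
      (D α).symm u * (D β).symm v
        = (D (α * β)).symm (l ((D α).symm u) v + r u ((D β).symm v)) := by
  intro α β u v
  rw [eq_comm, LinearEquiv.symm_apply_eq, hD α β]
  simp [add_comm]
end

section
/- Let $\{N_\alpha : A \to A\}_{\alpha \in \Omega}$ be a Nijenhuis family on an associative algebra $A$. Then the linear map $N : A \otimes k\Omega \to A \otimes k\Omega$ defined by $N(a \otimes \alpha) = N_\alpha(a) \otimes \alpha$ is a Nijenhuis operator on the tensor product algebra $A \otimes k\Omega$, i.e. $N(x) \bullet N(y) = N(N(x)\bullet y + x \bullet N(y) - N(x \bullet y))$ for all $x,y \in A \otimes k\Omega$. -/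
/-! The Nijenhuis identity for `N` says that the Nijenhuis torsion of `N` with respect to `•`,
a `k`-bilinear map on `A ⊗ kΩ`, vanishes. A bilinear map on `Ω →₀ A` is determined by its values
on pairs of pure tensors `a ⊗ α`, `b ⊗ β`, and there the torsion is
`(N_α a * N_β b - N_{αβ}(N_α a * b + a * N_β b - N_{αβ}(a * b))) ⊗ αβ`, which is zero by the
Nijenhuis family identity. -/

namespace LinearMap

variable {R M : Type*} [CommRing R] [AddCommGroup M] [Module R M]

def nijenhuisTorsion (μ : M →ₗ[R] M →ₗ[R] M) (N : M →ₗ[R] M) : M →ₗ[R] M →ₗ[R] M :=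
  μ.compl₁₂ N N - (μ ∘ₗ N + μ.compl₂ N - μ.compr₂ N).compr₂ N

theorem nijenhuisTorsion_apply (μ : M →ₗ[R] M →ₗ[R] M) (N : M →ₗ[R] M) (x y : M) :
    nijenhuisTorsion μ N x y = μ (N x) (N y) - N (μ (N x) y + μ x (N y) - N (μ x y)) := by
  simp [nijenhuisTorsion]

end LinearMap

theorem Finsupp.bilinear_ext {R α β M M' P : Type*} [CommSemiring R]
    [AddCommMonoid M] [Module R M] [AddCommMonoid M'] [Module R M'] [AddCommMonoid P] [Module R P]
    ⦃φ ψ : (α →₀ M) →ₗ[R] (β →₀ M') →ₗ[R] P⦄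
    (h : ∀ a m b m', φ (single a m) (single b m') = ψ (single a m) (single b m')) : φ = ψ :=
  Finsupp.lhom_ext fun a m => Finsupp.lhom_ext fun b m' => h a m b m'

theorem Nijenhuis_family_induces_Nijenhuis_operator_on_tensor_general
    {k Ω A : Type*} [Field k] [Semigroup Ω]
    [NonUnitalRing A] [Module k A]
    (Nf : Ω → A →ₗ[k] A)
    (hNf : ∀ (α β : Ω) (a b : A),
      Nf α a * Nf β b
        = Nf (α * β) (Nf α a * b + a * Nf β b - Nf (α * β) (a * b)))
    (bul : (Ω →₀ A) →ₗ[k] (Ω →₀ A) →ₗ[k] (Ω →₀ A))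
    (hbul : ∀ (α β : Ω) (a b : A),
      bul (Finsupp.single α a) (Finsupp.single β b) = Finsupp.single (α * β) (a * b))
    (N : (Ω →₀ A) →ₗ[k] (Ω →₀ A))
    (hN : ∀ (α : Ω) (a : A), N (Finsupp.single α a) = Finsupp.single α (Nf α a)) :
    ∀ x y : Ω →₀ A,
      bul (N x) (N y) = N (bul (N x) y + bul x (N y) - N (bul x y)) := by
  have torsion_eq_zero : bul.nijenhuisTorsion N = 0 := by
    refine Finsupp.bilinear_ext fun α a β b => ?_
    rw [LinearMap.nijenhuisTorsion_apply, LinearMap.zero_apply, LinearMap.zero_apply, hN, hN,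
      hbul, hbul, hbul, hbul, hN, ← Finsupp.single_add, ← Finsupp.single_sub, hN, hNf, sub_self]
  intro x y
  rw [← sub_eq_zero, ← LinearMap.nijenhuisTorsion_apply, torsion_eq_zero]
  rfl

/-- A Nijenhuis family `{N_α}` on `A` induces a Nijenhuis operator on the
tensor product algebra `A ⊗ kΩ`, modelled as `Ω →₀ A` (with `single α a ↔ a ⊗ α`),
via `N (a ⊗ α) = N_α(a) ⊗ α`. -/
theorem Nijenhuis_family_induces_Nijenhuis_operator_on_tensor
    {k Ω A : Type*} [Field k] [Semigroup Ω]
    [NonUnitalRing A] [Module k A] [SMulCommClass k A A] [IsScalarTower k A A]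
    (Nf : Ω → A →ₗ[k] A)
    (hNf : ∀ (α β : Ω) (a b : A),
      Nf α a * Nf β b
        = Nf (α * β) (Nf α a * b + a * Nf β b - Nf (α * β) (a * b)))
    (bul : (Ω →₀ A) →ₗ[k] (Ω →₀ A) →ₗ[k] (Ω →₀ A))
    (hbul : ∀ (α β : Ω) (a b : A),
      bul (Finsupp.single α a) (Finsupp.single β b) = Finsupp.single (α * β) (a * b))
    (N : (Ω →₀ A) →ₗ[k] (Ω →₀ A))
    (hN : ∀ (α : Ω) (a : A), N (Finsupp.single α a) = Finsupp.single α (Nf α a)) :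
    ∀ x y : Ω →₀ A,
      bul (N x) (N y) = N (bul (N x) y + bul x (N y) - N (bul x y)) :=
  Nijenhuis_family_induces_Nijenhuis_operator_on_tensor_general Nf hNf bul hbul N hN
end

section
/- Let $\{T_\alpha : M \to A\}_{\alpha \in \Omega}$ and $\{S_\alpha : M \to A\}_{\alpha \in \Omega}$ be compatible $\mathcal{O}$-operator families such that each $S_\alpha$ is a linear bijection. Then the collection $\{N_\alpha = T_\alpha \circ S_\alpha^{-1} : A \to A\}_{\alpha \in \Omega}$ is a Nijenhuis family on $A$. -/
/-- If `{T_α}` and `{S_α}` are compatible O-operator families and each `S_α`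
is a linear bijection, then `{N_α = T_α ∘ S_α⁻¹}` is a Nijenhuis family on `A`. -/
theorem compatible_O_operator_families_give_Nijenhuis_family
    {k Ω A M : Type*} [Field k] [Semigroup Ω]
    [NonUnitalRing A] [Module k A] [SMulCommClass k A A] [IsScalarTower k A A]
    [AddCommGroup M] [Module k M]
    (l : A →ₗ[k] M →ₗ[k] M) (r : M →ₗ[k] A →ₗ[k] M)
    (hll : ∀ (a b : A) (u : M), l (a * b) u = l a (l b u))
    (hlr : ∀ (a : A) (u : M) (b : A), r (l a u) b = l a (r u b))
    (hrr : ∀ (u : M) (a b : A), r (r u a) b = r u (a * b))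
    (T : Ω → M →ₗ[k] A) (S : Ω → M ≃ₗ[k] A)
    (hT : ∀ (α β : Ω) (u v : M),
      T α u * T β v = T (α * β) (l (T α u) v + r u (T β v)))
    (hS : ∀ (α β : Ω) (u v : M),
      (S α u : A) * S β v = S (α * β) (l (S α u) v + r u (S β v)))
    (hcomp : ∀ (α β : Ω) (u v : M),
      T α u * S β v + S α u * T β v
        = T (α * β) (l (S α u) v + r u (S β v))
          + S (α * β) (l (T α u) v + r u (T β v)))
    (N : Ω → A → A)
    (hN : ∀ (α : Ω) (a : A), N α a = T α ((S α).symm a)) :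
    ∀ (α β : Ω) (a b : A),
      N α a * N β b = N (α * β) (N α a * b + a * N β b - N (α * β) (a * b)) := by
  intro α β a b
  set u := (S α).symm a with hu
  set v := (S β).symm b with hvv
  have ha : S α u = a := (S α).apply_symm_apply a
  have hb : S β v = b := (S β).apply_symm_apply b
  simp only [hN]
  have h1 := hS α β u v
  rw [ha, hb] at h1
  have h3 : (S (α * β)).symm (a * b) = l a v + r u b := by
    rw [h1, (S (α * β)).symm_apply_apply]
  have h2 := hcomp α β u v
  rw [ha, hb] at h2
  have h4 : T α u * b + a * T β v - T (α * β) ((S (α * β)).symm (a * b))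
      = S (α * β) (l (T α u) v + r u (T β v)) := by
    rw [h3, sub_eq_iff_eq_add, h2, add_comm]
  rw [← hu, ← hvv, h4, (S (α * β)).symm_apply_apply, ← hT]
end

section
/- Let $(D, \{\prec_\alpha, \succ_\alpha\}_{\alpha \in \Omega})$ be a dendriform family algebra. Then the vector space $D \otimes k\Omega$ with the operations $(x\otimes\alpha) \prec (y\otimes\beta) = (x \prec_\beta y)\otimes\alpha\beta$ and $(x\otimes\alpha) \succ (y\otimes\beta) = (x \succ_\alpha y)\otimes\alpha\beta$ is a dendriform algebra. -/
/-!
`D ⊗ kΩ` is modelled as `Ω →₀ D`, with `single α x` for `x ⊗ α`. Both sides of each dendriform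
axiom are trilinear, so it suffices to check them on pure tensors `x ⊗ α, y ⊗ β, z ⊗ γ`; there
both sides live in degree `αβγ`, and associativity of `Ω` turns the identity into the
corresponding axiom of the dendriform family.
-/

theorem Finsupp.trilinear_apply_eq_of_single {k Ω D N : Type*} [CommSemiring k]
    [AddCommMonoid D] [Module k D] [AddCommMonoid N] [Module k N]
    {f g : (Ω →₀ D) →ₗ[k] (Ω →₀ D) →ₗ[k] (Ω →₀ D) →ₗ[k] N}
    (h : ∀ α β γ (x y z : D), f (single α x) (single β y) (single γ z) =
      g (single α x) (single β y) (single γ z))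
    (u v w : Ω →₀ D) : f u v w = g u v w := by
  have hfg : f = g := by ext α x β y γ z; exact h α β γ x y z
  rw [hfg]

/-- A dendriform family algebra `(D, {≺_α, ≻_α})` induces a dendriform algebra
on `D ⊗ kΩ` (modelled as `Ω →₀ D`, with `single α x ↔ x ⊗ α`), where
`(x⊗α) ≺ (y⊗β) = (x ≺_β y) ⊗ αβ` and `(x⊗α) ≻ (y⊗β) = (x ≻_α y) ⊗ αβ`. -/
theorem dendriform_family_algebra_induces_dendriform_algebra
    {k Ω D : Type*} [Field k] [Semigroup Ω]
    [AddCommGroup D] [Module k D]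
    (p s : Ω → D →ₗ[k] D →ₗ[k] D)
    (hd1 : ∀ (α β : Ω) (x y z : D),
      p β (p α x y) z = p (α * β) x (p β y z + s α y z))
    (hd2 : ∀ (α β : Ω) (x y z : D),
      p β (s α x y) z = s α x (p β y z))
    (hd3 : ∀ (α β : Ω) (x y z : D),
      s (α * β) (p β x y + s α x y) z = s α x (s β y z))
    (P S : (Ω →₀ D) →ₗ[k] (Ω →₀ D) →ₗ[k] (Ω →₀ D))
    (hP : ∀ (α β : Ω) (x y : D),
      P (Finsupp.single α x) (Finsupp.single β y) = Finsupp.single (α * β) (p β x y))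
    (hS : ∀ (α β : Ω) (x y : D),
      S (Finsupp.single α x) (Finsupp.single β y) = Finsupp.single (α * β) (s α x y)) :
    (∀ x y z : Ω →₀ D, P (P x y) z = P x (P y z + S y z)) ∧
    (∀ x y z : Ω →₀ D, P (S x y) z = S x (P y z)) ∧
    (∀ x y z : Ω →₀ D, S (P x y + S x y) z = S x (S y z)) := by
  -- `(B.compr₂ A) x y z = A (B x y) z` and `((llcomp.compl₂ B).comp A) x y z = A x (B y z)`
  refine ⟨Finsupp.trilinear_apply_eq_of_single (f := P.compr₂ P)
      (g := ((LinearMap.llcomp k _ _ _).compl₂ (P + S)).comp P) ?_,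
    Finsupp.trilinear_apply_eq_of_single (f := S.compr₂ P)
      (g := ((LinearMap.llcomp k _ _ _).compl₂ P).comp S) ?_,
    Finsupp.trilinear_apply_eq_of_single (f := (P + S).compr₂ S)
      (g := ((LinearMap.llcomp k _ _ _).compl₂ S).comp S) ?_⟩ <;>
  intro α β γ x y z <;>
  simp only [LinearMap.compr₂_apply, LinearMap.comp_apply, LinearMap.compl₂_apply,
    LinearMap.llcomp_apply, LinearMap.add_apply, hP, hS, ← Finsupp.single_add, mul_assoc]
  · rw [hd1]
  · rw [hd2]
  · rw [hd3]
end

section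
/- Let $\{T_\alpha : M \to A\}_{\alpha \in \Omega}$ be an $\mathcal{O}$-operator family. Then $M$ with the operations $u \prec_\alpha v = u \cdot T_\alpha(v)$ and $u \succ_\alpha v = T_\alpha(u) \cdot v$ is a dendriform family algebra. -/
/-- An O-operator family `{T_α : M → A}` induces a dendriform family algebra
on `M` via `u ≺_α v = u · T_α(v)` and `u ≻_α v = T_α(u) · v`. -/
theorem O_operator_family_induces_dendriform_family_algebra
    {k Ω A M : Type*} [Field k] [Semigroup Ω]
    [NonUnitalRing A] [Module k A] [SMulCommClass k A A] [IsScalarTower k A A]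
    [AddCommGroup M] [Module k M]
    (l : A →ₗ[k] M →ₗ[k] M) (r : M →ₗ[k] A →ₗ[k] M)
    (hll : ∀ (a b : A) (u : M), l (a * b) u = l a (l b u))
    (hlr : ∀ (a : A) (u : M) (b : A), r (l a u) b = l a (r u b))
    (hrr : ∀ (u : M) (a b : A), r (r u a) b = r u (a * b))
    (T : Ω → M →ₗ[k] A)
    (hT : ∀ (α β : Ω) (u v : M),
      T α u * T β v = T (α * β) (l (T α u) v + r u (T β v))) :
    (∀ (α β : Ω) (x y z : M),
      r (r x (T α y)) (T β z) = r x (T (α * β) (r y (T β z) + l (T α y) z))) ∧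
    (∀ (α β : Ω) (x y z : M),
      r (l (T α x) y) (T β z) = l (T α x) (r y (T β z))) ∧
    (∀ (α β : Ω) (x y z : M),
      l (T (α * β) (r x (T β y) + l (T α x) y)) z = l (T α x) (l (T β y) z)) := by
  refine ⟨fun α β x y z => ?_, fun α β x y z => hlr _ _ _, fun α β x y z => ?_⟩
  · rw [hrr, hT, add_comm]
  · rw [add_comm, ← hT, hll]
end

section
/- Let $A$ be a unital associative algebra and $\{r_\alpha = \sum r_\alpha^{(1)} \otimes r_\alpha^{(2)} \in A \otimes A\}_{\alpha\in\Omega}$ be an associative Yang-Baxter family of type-I, i.e. $r^{13}_{\alpha\beta} r^{12}_\alpha - r^{12}_\alpha r^{23}_\beta + r^{23}_\beta r^{13}_{\alpha\beta} = 0$ in $A^{\otimes 3}$ for all $\alpha,\beta \in \Omega$. Then the maps $R_\alpha(a) = \sum r_\alpha^{(1)} \cdot a \cdot r_\alpha^{(2)}$ form a Rota-Baxter family on $A$. -/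
open TensorProduct

/-- An associative Yang-Baxter family of type-I on a unital algebra `A`
induces a Rota-Baxter family via `R_α(a) = Σ r_α^{(1)} · a · r_α^{(2)}`. -/
theorem AYBF_typeI_gives_RotaBaxter_family
    {k Ω A : Type*} [Field k] [Semigroup Ω] [Ring A] [Algebra k A]
    (r : Ω → A ⊗[k] A)
    (r12 r13 r23 : A ⊗[k] A → (A ⊗[k] A) ⊗[k] A)
    (hr12 : ∀ x, r12 x = x ⊗ₜ[k] (1 : A))
    (hr13 : ∀ x, r13 x
      = (TensorProduct.map ((TensorProduct.mk k A A).flip 1) LinearMap.id) x)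
    (hr23 : ∀ x, r23 x
      = (TensorProduct.map ((TensorProduct.mk k A A) 1) LinearMap.id) x)
    (haybf : ∀ α β : Ω,
      r13 (r (α * β)) * r12 (r α) - r12 (r α) * r23 (r β)
        + r23 (r β) * r13 (r (α * β)) = 0)
    (R : Ω → A → A)
    (hR : ∀ (α : Ω) (a : A),
      R α a = TensorProduct.lift ((LinearMap.mul k A).comp (LinearMap.mulRight k a)) (r α)) :
    ∀ (α β : Ω) (a b : A),
      R α a * R β b = R (α * β) (R α a * b + a * R β b) := by
  intro α β a b
  set F : A → A ⊗[k] A →ₗ[k] A :=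
    fun c => TensorProduct.lift ((LinearMap.mul k A).comp (LinearMap.mulRight k c)) with hF
  have hFapply : ∀ (c x z : A), F c (x ⊗ₜ[k] z) = x * c * z := by
    intro c x z
    simp [hF]
  -- The trilinear map (x, y, z) ↦ x * a * y * b * z
  let M : A →ₗ[k] A →ₗ[k] A →ₗ[k] A :=
    LinearMap.mk₂ k (fun x y => LinearMap.mul k A (x * a * y * b))
      (by intro x x' y; simp [add_mul])
      (by intro c x y; simp [smul_mul_assoc])
      (by intro x y y'; simp [mul_add, add_mul])
      (by intro c x y; simp [mul_smul_comm, smul_mul_assoc])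
  set T : (A ⊗[k] A) ⊗[k] A →ₗ[k] A :=
    TensorProduct.lift (TensorProduct.lift M) with hT
  have hTapply : ∀ x y z : A, T ((x ⊗ₜ[k] y) ⊗ₜ[k] z) = x * a * y * b * z := by
    intro x y z; simp [hT, M]
  have hFadd : ∀ (c₁ c₂ : A) (u : A ⊗[k] A), F (c₁ + c₂) u = F c₁ u + F c₂ u := by
    intro c₁ c₂ u
    induction u using TensorProduct.induction_on with
    | zero => simp
    | tmul x z => simp [hFapply, mul_add, add_mul]
    | add u v hu hv => simp [map_add, hu, hv]; abel
  have hFzero : ∀ u : A ⊗[k] A, F (0 : A) u = 0 := by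
    intro u
    induction u using TensorProduct.induction_on with
    | zero => simp
    | tmul x z => simp [hFapply]
    | add u v hu hv => simp [map_add, hu, hv]
  -- key computations
  have key1 : ∀ u p : A ⊗[k] A, T (r13 u * r12 p) = F (F a p * b) u := by
    intro u p
    rw [hr13, hr12]
    induction u using TensorProduct.induction_on with
    | zero => simp
    | tmul u1 u2 =>
      induction p using TensorProduct.induction_on with
      | zero => simp [hFzero]
      | tmul p1 p2 =>
        simp only [TensorProduct.map_tmul, TensorProduct.mk_apply, LinearMap.flip_apply,
          LinearMap.id_coe, id_eq, Algebra.TensorProduct.tmul_mul_tmul, hTapply, hFapply,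
          one_mul, mul_one]
        simp [mul_assoc]
      | add p q hp hq =>
        simp only [map_add, TensorProduct.add_tmul, mul_add, hp, hq, add_mul, hFadd]
    | add u v hu hv => simp only [map_add, add_mul, hu, hv]
  have key2 : ∀ p s : A ⊗[k] A, T (r12 p * r23 s) = F a p * F b s := by
    intro p s
    rw [hr12, hr23]
    induction p using TensorProduct.induction_on with
    | zero => simp
    | tmul p1 p2 =>
      induction s using TensorProduct.induction_on with
      | zero => simp
      | tmul s1 s2 =>
        simp only [TensorProduct.map_tmul, TensorProduct.mk_apply,
          LinearMap.id_coe, id_eq, Algebra.TensorProduct.tmul_mul_tmul, hTapply, hFapply,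
          one_mul, mul_one]
        simp [mul_assoc]
      | add p q hp hq => simp only [map_add, mul_add, hp, hq]
    | add u v hu hv =>
      simp only [TensorProduct.add_tmul, add_mul, map_add, hu, hv]
  have key3 : ∀ s u : A ⊗[k] A, T (r23 s * r13 u) = F (a * F b s) u := by
    intro s u
    rw [hr13, hr23]
    induction s using TensorProduct.induction_on with
    | zero => simp [hFzero]
    | tmul s1 s2 =>
      induction u using TensorProduct.induction_on with
      | zero => simp
      | tmul u1 u2 =>
        simp only [TensorProduct.map_tmul, TensorProduct.mk_apply, LinearMap.flip_apply,
          LinearMap.id_coe, id_eq, Algebra.TensorProduct.tmul_mul_tmul, hTapply, hFapply,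
          one_mul, mul_one]
        simp [mul_assoc]
      | add p q hp hq => simp only [map_add, mul_add, add_mul, hp, hq]
    | add u v hu hv =>
      simp only [map_add, mul_add, add_mul, hu, hv, hFadd]
  have E := congrArg T (haybf α β)
  rw [map_add, map_sub, map_zero, key1, key2, key3] at E
  have hRa : R α a = F a (r α) := hR α a
  have hRb : R β b = F b (r β) := hR β b
  rw [hRa, hRb, hR (α * β), hFadd]
  rw [sub_add_eq_add_sub, sub_eq_zero] at E
  exact E.symm
end

section
/- Let $A$ be a unital associative algebra and $\{r_\alpha \in A\otimes A\}_{\alpha\in\Omega}$ a skew-symmetric associative Yang-Baxter family of type-II, i.e. each $r_\alpha = -\tau(r_\alpha)$ and $r^{13}_\alpha r^{12}_\beta - r^{12}_{\alpha\beta} r^{23}_\alpha + r^{23}_\beta r^{13}_{\alpha\beta} = 0$ for all $\alpha,\beta\in\Omega$. Then the collection of maps $T_\alpha : A^* \to A$ defined by $T_\alpha(f) = \sum f(r_\alpha^{(2)}) r_\alpha^{(1)}$ is an $\mathcal{O}$-operator family on the coadjoint bimodule $A^*$. -/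
open TensorProduct

section Aux
variable {k A : Type*} [Field k] [Ring A] [Algebra k A]

/-- `TT f (a ⊗ b) = f b • a` -/
noncomputable def TT (f : Module.Dual k A) : A ⊗[k] A →ₗ[k] A :=
  TensorProduct.lift (((LinearMap.lsmul k A).comp f).flip)

/-- `SS g (a ⊗ b) = g a • b` -/
noncomputable def SS (g : Module.Dual k A) : A ⊗[k] A →ₗ[k] A :=
  TensorProduct.lift ((LinearMap.lsmul k A).comp g)

@[simp] lemma TT_tmul (f : Module.Dual k A) (a b : A) : TT f (a ⊗ₜ[k] b) = f b • a := by
  simp [TT]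

@[simp] lemma SS_tmul (g : Module.Dual k A) (a b : A) : SS g (a ⊗ₜ[k] b) = g a • b := by
  simp [SS]

noncomputable def Bmap (f g : Module.Dual k A) : A →ₗ[k] A →ₗ[k] A →ₗ[k] A :=
  LinearMap.mk₂ k (fun x y => g y • f.smulRight x)
    (fun x x' y => by ext z; simp [smul_add])
    (fun c x y => by ext z; simp [smul_smul, mul_comm, mul_assoc, mul_left_comm])
    (fun x y y' => by ext z; simp [add_smul])
    (fun c x y => by ext z; simp [smul_smul, mul_assoc])

noncomputable def Phi (f g : Module.Dual k A) : (A ⊗[k] A) ⊗[k] A →ₗ[k] A :=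
  TensorProduct.lift (TensorProduct.lift (Bmap f g))

@[simp] lemma Phi_tmul (f g : Module.Dual k A) (x y z : A) :
    Phi f g ((x ⊗ₜ[k] y) ⊗ₜ[k] z) = g y • f z • x := by
  simp [Phi, Bmap]

lemma lift_add' (M N : A →ₗ[k] A →ₗ[k] A) (x : A ⊗[k] A) :
    TensorProduct.lift (M + N) x = TensorProduct.lift M x + TensorProduct.lift N x := by
  induction x using TensorProduct.induction_on with
  | zero => simp
  | tmul a b => simp
  | add u v hu hv => simp [map_add, hu, hv]; abel

lemma lift_neg' (M : A →ₗ[k] A →ₗ[k] A) (x : A ⊗[k] A) :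
    TensorProduct.lift (-M) x = - TensorProduct.lift M x := by
  induction x using TensorProduct.induction_on with
  | zero => simp
  | tmul a b => simp
  | add u v hu hv => simp [map_add, hu, hv]; abel

lemma flip_zero' : ((0 : A →ₗ[k] A →ₗ[k] A)).flip = 0 := by
  ext p q; rfl

lemma lift_zero' (x : A ⊗[k] A) :
    TensorProduct.lift (0 : A →ₗ[k] A →ₗ[k] A) x = 0 := by
  induction x using TensorProduct.induction_on with
  | zero => simp
  | tmul a b => simp
  | add u v hu hv => simp [map_add, hu, hv]

lemma SS_eq_TT_comm (g : Module.Dual k A) (x : A ⊗[k] A) :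
    SS g x = TT g ((TensorProduct.comm k A A) x) := by
  induction x using TensorProduct.induction_on with
  | zero => simp
  | tmul a b => simp
  | add u v hu hv => simp [map_add, hu, hv]

lemma key_A (f g : Module.Dual k A) (x y : A ⊗[k] A) :
    Phi f g ((TensorProduct.map ((TensorProduct.mk k A A).flip 1) LinearMap.id x)
        * (y ⊗ₜ[k] (1 : A)))
      = TT f x * TT g y := by
  induction x using TensorProduct.induction_on with
  | zero => simp
  | tmul a b =>
    induction y using TensorProduct.induction_on with
    | zero => simp
    | tmul c d =>
      simp only [TensorProduct.map_tmul, LinearMap.flip_apply, TensorProduct.mk_apply,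
        LinearMap.id_coe, id_eq, Algebra.TensorProduct.tmul_mul_tmul, one_mul, mul_one,
        Phi_tmul, TT_tmul]
      rw [smul_mul_assoc, mul_smul_comm, smul_comm]
    | add u v hu hv =>
      simp only [add_tmul, mul_add, map_add, hu, hv]
  | add u v hu hv =>
    simp only [map_add, add_mul, map_add, hu, hv, add_mul]

lemma key_B (f g : Module.Dual k A) (x z : A ⊗[k] A) :
    Phi f g ((z ⊗ₜ[k] (1 : A))
        * (TensorProduct.map ((TensorProduct.mk k A A) 1) LinearMap.id x))
      = TensorProduct.lift
          (((LinearMap.lsmul k A).comp (g.comp (LinearMap.mulRight k (TT f x)))).flip) z := by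
  induction x using TensorProduct.induction_on with
  | zero => simp [flip_zero', lift_zero']
  | tmul a b =>
    induction z using TensorProduct.induction_on with
    | zero => simp
    | tmul e w =>
      simp only [TensorProduct.map_tmul, TensorProduct.mk_apply, LinearMap.id_coe, id_eq,
        Algebra.TensorProduct.tmul_mul_tmul, one_mul, mul_one, Phi_tmul, TT_tmul,
        TensorProduct.lift.tmul, LinearMap.flip_apply, LinearMap.comp_apply,
        LinearMap.mulRight_apply, LinearMap.lsmul_apply]
      rw [mul_smul_comm, map_smul, smul_eq_mul, mul_smul, smul_comm]
    | add u v hu hv =>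
      simp only [add_tmul, add_mul, map_add, hu, hv]
  | add u v hu hv =>
    have hmr : ((LinearMap.lsmul k A).comp
          (g.comp (LinearMap.mulRight k (TT f u + TT f v)))).flip
        = ((LinearMap.lsmul k A).comp (g.comp (LinearMap.mulRight k (TT f u)))).flip
          + ((LinearMap.lsmul k A).comp (g.comp (LinearMap.mulRight k (TT f v)))).flip := by
      ext p q
      simp [mul_add, add_smul]
    simp only [map_add, mul_add, hu, hv, hmr, lift_add']

lemma key_C (f g : Module.Dual k A) (y z : A ⊗[k] A) :
    Phi f g ((TensorProduct.map ((TensorProduct.mk k A A) 1) LinearMap.id y)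
        * (TensorProduct.map ((TensorProduct.mk k A A).flip 1) LinearMap.id z))
      = TensorProduct.lift
          (((LinearMap.lsmul k A).comp (f.comp (LinearMap.mulLeft k (SS g y)))).flip) z := by
  induction y using TensorProduct.induction_on with
  | zero => simp [flip_zero', lift_zero']
  | tmul c d =>
    induction z using TensorProduct.induction_on with
    | zero => simp
    | tmul e w =>
      simp only [TensorProduct.map_tmul, TensorProduct.mk_apply, LinearMap.flip_apply,
        LinearMap.id_coe, id_eq, Algebra.TensorProduct.tmul_mul_tmul, one_mul, mul_one,
        Phi_tmul, SS_tmul, TensorProduct.lift.tmul, LinearMap.comp_apply,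
        LinearMap.mulLeft_apply, LinearMap.lsmul_apply]
      rw [smul_mul_assoc, map_smul, smul_eq_mul, mul_smul]
    | add u v hu hv =>
      simp only [map_add, mul_add, add_mul, hu, hv]
  | add u v hu hv =>
    have hml : ((LinearMap.lsmul k A).comp
          (f.comp (LinearMap.mulLeft k (SS g u + SS g v)))).flip
        = ((LinearMap.lsmul k A).comp (f.comp (LinearMap.mulLeft k (SS g u)))).flip
          + ((LinearMap.lsmul k A).comp (f.comp (LinearMap.mulLeft k (SS g v)))).flip := by
      ext p q
      simp [add_mul, add_smul]
    simp only [map_add, add_mul, hu, hv, hml, lift_add']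

end Aux

/-- A skew-symmetric associative Yang-Baxter family of type-II on a unital
algebra `A` induces an O-operator family `T_α : A* → A`, `T_α(f) = Σ f(r_α^{(2)}) r_α^{(1)}`,
on the coadjoint bimodule `A*` (where `(a·f)(b) = f(b·a)` and `(f·a)(b) = f(a·b)`). -/
theorem skewsymmetric_AYBF_typeII_gives_O_operator_family
    {k Ω A : Type*} [Field k] [Semigroup Ω] [Ring A] [Algebra k A]
    (r : Ω → A ⊗[k] A)
    (hskew : ∀ α : Ω, (TensorProduct.comm k A A) (r α) = - r α)
    (r12 r13 r23 : A ⊗[k] A → (A ⊗[k] A) ⊗[k] A)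
    (hr12 : ∀ x, r12 x = x ⊗ₜ[k] (1 : A))
    (hr13 : ∀ x, r13 x
      = (TensorProduct.map ((TensorProduct.mk k A A).flip 1) LinearMap.id) x)
    (hr23 : ∀ x, r23 x
      = (TensorProduct.map ((TensorProduct.mk k A A) 1) LinearMap.id) x)
    (haybf : ∀ α β : Ω,
      r13 (r α) * r12 (r β) - r12 (r (α * β)) * r23 (r α)
        + r23 (r β) * r13 (r (α * β)) = 0)
    (T : Ω → Module.Dual k A → A)
    (hT : ∀ (α : Ω) (f : Module.Dual k A),
      T α f = TensorProduct.lift (((LinearMap.lsmul k A).comp f).flip) (r α)) :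
    ∀ (α β : Ω) (f g : Module.Dual k A),
      T α f * T β g
        = T (α * β)
            (g.comp (LinearMap.mulRight k (T α f)) + f.comp (LinearMap.mulLeft k (T β g))) := by
  intro α β f g
  have hTT : ∀ (γ : Ω) (h : Module.Dual k A), T γ h = TT h (r γ) := fun γ h => hT γ h
  have key := haybf α β
  simp only [hr12, hr13, hr23] at key
  have key2 := congrArg (Phi f g) key
  rw [map_zero, map_add, map_sub, key_A, key_B, key_C] at key2
  -- handle the SS term via skew-symmetry
  have hS : SS g (r β) = - TT g (r β) := by
    rw [SS_eq_TT_comm, hskew, map_neg]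
  rw [hS] at key2
  have hneg : ((LinearMap.lsmul k A).comp
        (f.comp (LinearMap.mulLeft k (- TT g (r β))))).flip
      = -(((LinearMap.lsmul k A).comp
        (f.comp (LinearMap.mulLeft k (TT g (r β))))).flip) := by
    ext p q
    simp [neg_mul]
  rw [hneg, lift_neg'] at key2
  rw [add_neg_eq_zero, sub_eq_iff_eq_add'] at key2
  have hsplit : ((LinearMap.lsmul k A).comp
        (g.comp (LinearMap.mulRight k (TT f (r α)))
          + f.comp (LinearMap.mulLeft k (TT g (r β))))).flip
      = ((LinearMap.lsmul k A).comp (g.comp (LinearMap.mulRight k (TT f (r α))))).flip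
        + ((LinearMap.lsmul k A).comp (f.comp (LinearMap.mulLeft k (TT g (r β))))).flip := by
    ext p q
    simp [add_smul]
  have hfin : TT (g.comp (LinearMap.mulRight k (TT f (r α)))
        + f.comp (LinearMap.mulLeft k (TT g (r β)))) (r (α * β))
      = TensorProduct.lift (((LinearMap.lsmul k A).comp
            (g.comp (LinearMap.mulRight k (TT f (r α))))).flip) (r (α * β))
        + TensorProduct.lift (((LinearMap.lsmul k A).comp
            (f.comp (LinearMap.mulLeft k (TT g (r β))))).flip) (r (α * β)) := by
    show TensorProduct.lift (((LinearMap.lsmul k A).comp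
          (g.comp (LinearMap.mulRight k (TT f (r α)))
            + f.comp (LinearMap.mulLeft k (TT g (r β))))).flip) (r (α * β)) = _
    rw [hsplit, lift_add']
  rw [hTT α f, hTT β g, hTT (α * β), hfin]
  exact key2
end

section
/- Let $A$ be an associative algebra, $M$ an $A$-bimodule, and $H : A\otimes A \to M$ a Hochschild 2-cocycle. A collection $\{T_\alpha : M \to A\}_{\alpha\in\Omega}$ of linear maps is an $H$-twisted $\mathcal{O}$-operator family if and only if the graphs $\{Gr(T_\alpha) = \{(T_\alpha(u), u) : u \in M\}\}_{\alpha\in\Omega}$ form a subalgebra family of the $H$-twisted semidirect product algebra $A \ltimes_H M$, i.e. $Gr(T_\alpha) \star_H Gr(T_\beta) \subseteq Gr(T_{\alpha\beta})$ for all $\alpha,\beta$. -/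
/-- `{T_α : M → A}` is an `H`-twisted O-operator family iff the graphs
`Gr(T_α)` form a subalgebra family of the `H`-twisted semidirect product `A ⋉_H M`. -/
theorem twisted_O_operator_family_iff_graph_subalgebra_family
    {k Ω A M : Type*} [Field k] [Semigroup Ω]
    [NonUnitalRing A] [Module k A] [SMulCommClass k A A] [IsScalarTower k A A]
    [AddCommGroup M] [Module k M]
    (l : A →ₗ[k] M →ₗ[k] M) (r : M →ₗ[k] A →ₗ[k] M)
    (hll : ∀ (a b : A) (u : M), l (a * b) u = l a (l b u))
    (hlr : ∀ (a : A) (u : M) (b : A), r (l a u) b = l a (r u b))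
    (hrr : ∀ (u : M) (a b : A), r (r u a) b = r u (a * b))
    (H : A →ₗ[k] A →ₗ[k] M)
    (hH : ∀ a b c : A, l a (H b c) - H (a * b) c + H a (b * c) - r (H a b) c = 0)
    (T : Ω → M →ₗ[k] A)
    (starH : A × M → A × M → A × M)
    (hstarH : ∀ p q : A × M,
      starH p q = (p.1 * q.1, l p.1 q.2 + r p.2 q.1 + H p.1 q.1))
    (Gr : Ω → Set (A × M))
    (hGr : ∀ α : Ω, Gr α = {p : A × M | ∃ u : M, p = (T α u, u)}) :
    (∀ (α β : Ω) (u v : M),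
      T α u * T β v
        = T (α * β) (l (T α u) v + r u (T β v) + H (T α u) (T β v)))
    ↔ (∀ (α β : Ω), ∀ p ∈ Gr α, ∀ q ∈ Gr β, starH p q ∈ Gr (α * β)) := by
  constructor
  · intro h α β p hp q hq
    rw [hGr] at hp hq ⊢
    obtain ⟨u, rfl⟩ := hp
    obtain ⟨v, rfl⟩ := hq
    refine ⟨l (T α u) v + r u (T β v) + H (T α u) (T β v), ?_⟩
    rw [hstarH]
    simp [h α β u v]
  · intro h α β u v
    have := h α β (T α u, u) (by rw [hGr]; exact ⟨u, rfl⟩) (T β v, v)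
      (by rw [hGr]; exact ⟨v, rfl⟩)
    rw [hGr, hstarH] at this
    obtain ⟨w, hw⟩ := this
    simp only [Prod.mk.injEq] at hw
    rw [hw.1, ← hw.2]
end

section
/- Let $\{R_\alpha : A \to A\}_{\alpha\in\Omega}$ be a Reynolds family on $A$ such that each $R_\alpha$ is a linear bijection. Then the collection $\{R_\alpha^{-1} - \mathrm{id}_A\}_{\alpha\in\Omega}$ is a derivation family on $A$ (with values in the adjoint bimodule), i.e. $(R_{\alpha\beta}^{-1} - \mathrm{id})(a\cdot b) = (R_\alpha^{-1} - \mathrm{id})(a)\cdot b + a\cdot(R_\beta^{-1} - \mathrm{id})(b)$ for all $a,b\in A$, $\alpha,\beta\in\Omega$. -/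
/-- If `{R_α}` is an invertible Reynolds family on `A`, then
`{R_α⁻¹ - id}` is a derivation family on `A` (values in the adjoint bimodule). -/
theorem invertible_Reynolds_family_gives_derivation_family
    {k Ω A : Type*} [Field k] [Semigroup Ω]
    [NonUnitalRing A] [Module k A] [SMulCommClass k A A] [IsScalarTower k A A]
    (R : Ω → A ≃ₗ[k] A)
    (hR : ∀ (α β : Ω) (a b : A),
      (R α a : A) * R β b
        = R (α * β) (R α a * b + a * R β b - R α a * R β b)) :
    ∀ (α β : Ω) (a b : A),
      (R (α * β)).symm (a * b) - a * b
        = ((R α).symm a - a) * b + a * ((R β).symm b - b) := by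
  intro α β a b
  have h := hR α β ((R α).symm a) ((R β).symm b)
  rw [(R α).apply_symm_apply, (R β).apply_symm_apply] at h
  have h2 : (R (α * β)).symm (a * b)
      = a * (R β).symm b + (R α).symm a * b - a * b :=
    (R (α * β)).symm_apply_eq.mpr h
  rw [h2, sub_mul, mul_sub]; abel
end

section
/- Let $A$ be an associative algebra and $\{D_\alpha\}_{\alpha\in\Omega}$ a derivation family on $A$ such that each $D_\alpha$ is nilpotent (or more generally, the sum $R_\alpha = \sum_{n=0}^\infty (-1)^n D_\alpha^n$ converges pointwise). Then $\{R_\alpha = \sum_{n=0}^\infty (-1)^n D_\alpha^n\}_{\alpha\in\Omega}$ is a Reynolds family on $A$. -/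
/-- If `{D_α}` is a derivation family on `A` with each `D_α` pointwise
nilpotent (so that `Σ_{n≥0} (-1)^n D_α^n` makes sense), then
`{R_α = Σ_{n≥0} (-1)^n D_α^n}` is a Reynolds family on `A`. -/
theorem derivation_family_geometric_series_is_Reynolds_family
    {k Ω A : Type*} [Field k] [Semigroup Ω]
    [NonUnitalRing A] [Module k A] [SMulCommClass k A A] [IsScalarTower k A A]
    (D : Ω → A →ₗ[k] A)
    (hD : ∀ (α β : Ω) (a b : A), D (α * β) (a * b) = D α a * b + a * D β b)
    (hnil : ∀ (α : Ω) (a : A), ∃ N : ℕ, ∀ n ≥ N, ((D α) ^ n) a = 0)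
    (R : Ω → A → A)
    (hR : ∀ (α : Ω) (a : A), R α a = ∑ᶠ n : ℕ, ((-1 : ℤ) ^ n) • (((D α) ^ n) a)) :
    ∀ (α β : Ω) (a b : A),
      R α a * R β b = R (α * β) (R α a * b + a * R β b - R α a * R β b) := by
  -- Express R as a finite sum once the powers vanish
  have hfin : ∀ (γ : Ω) (x : A) (N : ℕ), (∀ n ≥ N, ((D γ) ^ n) x = 0) →
      R γ x = ∑ n ∈ Finset.range N, ((-1 : ℤ) ^ n) • (((D γ) ^ n) x) := by
    intro γ x N hN
    rw [hR]
    apply finsum_eq_sum_of_support_subset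
    intro n hn
    simp only [Function.mem_support] at hn
    simp only [Finset.coe_range, Set.mem_Iio]
    by_contra h
    push_neg at h
    exact hn (by rw [hN n h, smul_zero])
  -- the telescoping identity
  have tele : ∀ (γ : Ω) (x : A) (N : ℕ), (∀ n ≥ N, ((D γ) ^ n) x = 0) →
      (∑ n ∈ Finset.range N, (((-1 : ℤ) ^ n) • (((D γ) ^ n) x)
        + ((-1 : ℤ) ^ n) • (((D γ) ^ (n + 1)) x))) = x := by
    intro γ x N hN
    have hterm : ∀ n : ℕ, ((-1 : ℤ) ^ n) • (((D γ) ^ n) x)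
        + ((-1 : ℤ) ^ n) • (((D γ) ^ (n + 1)) x)
        = (fun m => ((-1 : ℤ) ^ m) • (((D γ) ^ m) x)) n
          - (fun m => ((-1 : ℤ) ^ m) • (((D γ) ^ m) x)) (n + 1) := by
      intro n
      simp only [pow_succ (-1 : ℤ) n, mul_neg_one, neg_smul, sub_neg_eq_add]
    rw [Finset.sum_congr rfl (fun n _ => hterm n), Finset.sum_range_sub']
    simp [hN N le_rfl]
  -- key 1 : R γ x + D γ (R γ x) = x
  have key1 : ∀ (γ : Ω) (x : A), R γ x + D γ (R γ x) = x := by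
    intro γ x
    obtain ⟨N, hN⟩ := hnil γ x
    calc R γ x + D γ (R γ x)
        = (∑ n ∈ Finset.range N, ((-1 : ℤ) ^ n) • (((D γ) ^ n) x))
          + ∑ n ∈ Finset.range N, ((-1 : ℤ) ^ n) • (((D γ) ^ (n + 1)) x) := by
          rw [hfin γ x N hN, map_sum]
          congr 1
          refine Finset.sum_congr rfl fun n _ => ?_
          rw [map_zsmul]
          congr 1
          rw [pow_succ']
          rfl
      _ = x := by rw [← Finset.sum_add_distrib]; exact tele γ x N hN
  -- key 2 : R γ (x + D γ x) = x
  have key2 : ∀ (γ : Ω) (x : A), R γ (x + D γ x) = x := by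
    intro γ x
    obtain ⟨N, hN⟩ := hnil γ x
    have hN' : ∀ n ≥ N, ((D γ) ^ n) (x + D γ x) = 0 := by
      intro n hn
      rw [map_add, hN n hn]
      have : ((D γ) ^ n) (D γ x) = ((D γ) ^ (n + 1)) x := by
        rw [pow_succ]; rfl
      rw [this, hN (n + 1) (le_trans hn (Nat.le_succ n)), add_zero]
    rw [hfin γ _ N hN']
    calc (∑ n ∈ Finset.range N, ((-1 : ℤ) ^ n) • (((D γ) ^ n) (x + D γ x)))
        = ∑ n ∈ Finset.range N, (((-1 : ℤ) ^ n) • (((D γ) ^ n) x)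
            + ((-1 : ℤ) ^ n) • (((D γ) ^ (n + 1)) x)) := by
          refine Finset.sum_congr rfl fun n _ => ?_
          rw [map_add, smul_add]
          congr 2
      _ = x := tele γ x N hN
  intro α β a b
  have hDa : D α (R α a) = a - R α a := by
    have := key1 α a; linear_combination (norm := abel) this
  have hDb : D β (R β b) = b - R β b := by
    have := key1 β b; linear_combination (norm := abel) this
  have hX : R α a * b + a * R β b - R α a * R β b
      = R α a * R β b + D (α * β) (R α a * R β b) := by
    rw [hD α β, hDa, hDb]
    noncomm_ring
  rw [hX, key2 (α * β) (R α a * R β b)]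
end

section
/- For all non-negative integers $p, q$: $\sum_{i=0}^p \binom{i+q}{i} + \sum_{j=0}^q \binom{p+j}{j} - \sum_{i=0}^p \sum_{j=0}^q \binom{i+j}{i} = 1$. -/
/-- Hockey stick: `∑_{i=0}^p C(i+q,i) = C(p+q+1,p)`. -/
lemma hockey_stick (p q : ℕ) :
    (∑ i ∈ Finset.range (p + 1), ((i + q).choose i : ℤ))
      = ((p + q + 1).choose p : ℤ) := by
  induction p with
  | zero => simp
  | succ p ih =>
      rw [Finset.sum_range_succ, ih]
      have h : (p + 1 + q + 1).choose (p + 1)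
          = (p + q + 1).choose p + (p + 1 + q).choose (p + 1) := by
        rw [show p + 1 + q + 1 = (p + q + 1) + 1 from by ring, Nat.choose_succ_succ,
          show p + 1 + q = p + q + 1 from by ring]
      rw [h]
      push_cast
      ring

/-- For all `p q ≥ 0`,
`Σ_{i=0}^p C(i+q,i) + Σ_{j=0}^q C(p+j,j) - Σ_{i=0}^p Σ_{j=0}^q C(i+j,i) = 1`. -/
theorem binomial_sum_identity (p q : ℕ) :
    (∑ i ∈ Finset.range (p + 1), ((i + q).choose i : ℤ))
      + (∑ j ∈ Finset.range (q + 1), ((p + j).choose j : ℤ))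
      - (∑ i ∈ Finset.range (p + 1), ∑ j ∈ Finset.range (q + 1), ((i + j).choose i : ℤ))
      = 1 := by
  have hA := hockey_stick p q
  have hB : (∑ j ∈ Finset.range (q + 1), ((p + j).choose j : ℤ))
      = ((p + q + 1).choose (p + 1) : ℤ) := by
    have h1 := hockey_stick q p
    have h2 : (∑ j ∈ Finset.range (q + 1), ((p + j).choose j : ℤ))
        = (∑ j ∈ Finset.range (q + 1), ((j + p).choose j : ℤ)) := by
      apply Finset.sum_congr rfl
      intro j _
      rw [add_comm p j]
    have hn : (q + p + 1).choose q = (p + q + 1).choose (p + 1) := by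
      rw [show q + p + 1 = q + (p + 1) from by ring, Nat.choose_symm_add,
        add_comm q (p + 1), show p + 1 + q = p + q + 1 from by ring]
    rw [h2, h1, hn]
  have hInner : ∀ i, (∑ j ∈ Finset.range (q + 1), ((i + j).choose i : ℤ))
      = (((i + 1) + q).choose (i + 1) : ℤ) := by
    intro i
    have h1 := hockey_stick q i
    have h2 : (∑ j ∈ Finset.range (q + 1), ((i + j).choose i : ℤ))
        = (∑ j ∈ Finset.range (q + 1), ((j + i).choose j : ℤ)) := by
      apply Finset.sum_congr rfl
      intro j _
      rw [add_comm i j, Nat.choose_symm_add]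
    have hn : (q + i + 1).choose q = ((i + 1) + q).choose (i + 1) := by
      rw [show q + i + 1 = q + (i + 1) from rfl, Nat.choose_symm_add, add_comm]
    rw [h2, h1, hn]
  have hD : (∑ i ∈ Finset.range (p + 1), ∑ j ∈ Finset.range (q + 1), ((i + j).choose i : ℤ))
      = (((p + 1) + q + 1).choose (p + 1) : ℤ) - 1 := by
    have h1 := hockey_stick (p + 1) q
    rw [Finset.sum_range_succ'] at h1
    simp only [Nat.zero_add] at h1
    calc (∑ i ∈ Finset.range (p + 1), ∑ j ∈ Finset.range (q + 1), ((i + j).choose i : ℤ))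
        = ∑ i ∈ Finset.range (p + 1), (((i + 1) + q).choose (i + 1) : ℤ) := by
          exact Finset.sum_congr rfl fun i _ => hInner i
      _ = (((p + 1) + q + 1).choose (p + 1) : ℤ) - 1 := by
          have : ((q.choose 0 : ℕ) : ℤ) = 1 := by simp
          omega
  rw [hA, hB, hD]
  have hP : ((p + 1) + q + 1).choose (p + 1)
      = (p + q + 1).choose p + (p + q + 1).choose (p + 1) := by
    have h2 : (p + 1) + q + 1 = (p + q + 1) + 1 := by ring
    rw [h2, Nat.choose_succ_succ]
  rw [hP]
  push_cast
  ring
end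

section
/- Let $(D, \{\prec_\alpha, \succ_\alpha, \curlyvee_{\alpha,\beta}\}_{\alpha,\beta\in\Omega})$ be an NS-family algebra. Then $D \otimes k\Omega$ with the operations $(x\otimes\alpha)\prec(y\otimes\beta) = (x\prec_\beta y)\otimes\alpha\beta$, $(x\otimes\alpha)\succ(y\otimes\beta) = (x\succ_\alpha y)\otimes\alpha\beta$, $(x\otimes\alpha)\curlyvee(y\otimes\beta) = (x\curlyvee_{\alpha,\beta}y)\otimes\alpha\beta$ is an NS-algebra. -/
/-!
Both sides of each NS identity are trilinear in `(x, y, z)`, and `Ω →₀ D` is spanned by the pure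
tensors `single α x`, so it suffices to check the identities on pure tensors. There, using
associativity of `Ω`, each becomes the corresponding NS-family identity in the component `αβγ`.
-/

open Finsupp

theorem Finsupp.trilinear_ext {R α β γ M₁ M₂ M₃ N : Type*} [CommSemiring R]
    [AddCommMonoid M₁] [Module R M₁] [AddCommMonoid M₂] [Module R M₂]
    [AddCommMonoid M₃] [Module R M₃] [AddCommMonoid N] [Module R N]
    {F G : (α →₀ M₁) →ₗ[R] (β →₀ M₂) →ₗ[R] (γ →₀ M₃) →ₗ[R] N}
    (h : ∀ a b c x y z,
      F (single a x) (single b y) (single c z) = G (single a x) (single b y) (single c z)) :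
    F = G :=
  lhom_ext fun a x => lhom_ext fun b y => lhom_ext fun c z => h a b c x y z

namespace LinearMap

variable {R M N : Type*} [CommSemiring R] [AddCommMonoid M] [Module R M]
  [AddCommMonoid N] [Module R N]

/-- `C.compl₂Bilin B` is `(x, y, z) ↦ C x (B y z)`, the counterpart of
`B.compr₂ C = (x, y, z) ↦ C (B x y) z`. -/
def compl₂Bilin (C : M →ₗ[R] N →ₗ[R] N) (B : M →ₗ[R] M →ₗ[R] N) :
    M →ₗ[R] M →ₗ[R] M →ₗ[R] N :=
  (llcomp R M N N ∘ₗ C).compl₂ B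

@[simp]
theorem compl₂Bilin_apply (C : M →ₗ[R] N →ₗ[R] N) (B : M →ₗ[R] M →ₗ[R] N) (x y z : M) :
    C.compl₂Bilin B x y z = C x (B y z) :=
  rfl

end LinearMap

section

variable {k Ω D : Type*} [CommSemiring k] [Semigroup Ω] [AddCommMonoid D] [Module k D]

/-- `B` is the bilinear map on `D ⊗ kΩ`, modelled as `Ω →₀ D` with `single α x ↔ x ⊗ α`, given on
pure tensors by `(x ⊗ α, y ⊗ β) ↦ f α β x y ⊗ αβ`. -/
def IsFamilyInduced (B : (Ω →₀ D) →ₗ[k] (Ω →₀ D) →ₗ[k] (Ω →₀ D))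
    (f : Ω → Ω → D →ₗ[k] D →ₗ[k] D) : Prop :=
  ∀ α β x y, B (single α x) (single β y) = single (α * β) (f α β x y)

variable {p s : Ω → D →ₗ[k] D →ₗ[k] D} {v : Ω → Ω → D →ₗ[k] D →ₗ[k] D}
  {P S V : (Ω →₀ D) →ₗ[k] (Ω →₀ D) →ₗ[k] (Ω →₀ D)}

theorem IsFamilyInduced.single_single {B : (Ω →₀ D) →ₗ[k] (Ω →₀ D) →ₗ[k] (Ω →₀ D)}
    {f : Ω → Ω → D →ₗ[k] D →ₗ[k] D} (h : IsFamilyInduced B f) (α β : Ω) (x y : D) :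
    B (single α x) (single β y) = single (α * β) (f α β x y) :=
  h α β x y

theorem IsFamilyInduced.ns_prec_prec (hP : IsFamilyInduced P fun _ β ↦ p β)
    (hS : IsFamilyInduced S fun α _ ↦ s α) (hV : IsFamilyInduced V v)
    (hns : ∀ α β x y z, p β (p α x y) z = p (α * β) x (p β y z + s α y z + v α β y z))
    (x y z : Ω →₀ D) : P (P x y) z = P x (P y z + S y z + V y z) := by
  have : P.compr₂ P = P.compl₂Bilin (P + S + V) := Finsupp.trilinear_ext fun α β γ a b c ↦ by
    simp only [LinearMap.add_apply, LinearMap.compr₂_apply, LinearMap.compl₂Bilin_apply,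
      hP.single_single, hS.single_single, hV.single_single, ← single_add, hns, mul_assoc]
  exact DFunLike.congr_fun (LinearMap.congr_fun₂ this x y) z

theorem IsFamilyInduced.ns_succ_prec (hP : IsFamilyInduced P fun _ β ↦ p β)
    (hS : IsFamilyInduced S fun α _ ↦ s α)
    (hns : ∀ α β x y z, p β (s α x y) z = s α x (p β y z))
    (x y z : Ω →₀ D) : P (S x y) z = S x (P y z) := by
  have : S.compr₂ P = S.compl₂Bilin P := Finsupp.trilinear_ext fun α β γ a b c ↦ by
    simp only [LinearMap.compr₂_apply, LinearMap.compl₂Bilin_apply,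
      hP.single_single, hS.single_single, hns, mul_assoc]
  exact DFunLike.congr_fun (LinearMap.congr_fun₂ this x y) z

theorem IsFamilyInduced.ns_succ_succ (hP : IsFamilyInduced P fun _ β ↦ p β)
    (hS : IsFamilyInduced S fun α _ ↦ s α) (hV : IsFamilyInduced V v)
    (hns : ∀ α β x y z, s (α * β) (p β x y + s α x y + v α β x y) z = s α x (s β y z))
    (x y z : Ω →₀ D) : S (P x y + S x y + V x y) z = S x (S y z) := by
  have : (P + S + V).compr₂ S = S.compl₂Bilin S := Finsupp.trilinear_ext fun α β γ a b c ↦ by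
    simp only [LinearMap.add_apply, LinearMap.compr₂_apply, LinearMap.compl₂Bilin_apply,
      hP.single_single, hS.single_single, hV.single_single, ← single_add, hns, mul_assoc]
  exact DFunLike.congr_fun (LinearMap.congr_fun₂ this x y) z

theorem IsFamilyInduced.ns_curlyvee (hP : IsFamilyInduced P fun _ β ↦ p β)
    (hS : IsFamilyInduced S fun α _ ↦ s α) (hV : IsFamilyInduced V v)
    (hns : ∀ α β γ x y z,
      v (α * β) γ (p β x y + s α x y + v α β x y) z + p γ (v α β x y) z
        = s α x (v β γ y z) + v α (β * γ) x (p γ y z + s β y z + v β γ y z))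
    (x y z : Ω →₀ D) :
    V (P x y + S x y + V x y) z + P (V x y) z = S x (V y z) + V x (P y z + S y z + V y z) := by
  have : (P + S + V).compr₂ V + V.compr₂ P = S.compl₂Bilin V + V.compl₂Bilin (P + S + V) :=
    Finsupp.trilinear_ext fun α β γ a b c ↦ by
      simp only [LinearMap.add_apply, LinearMap.compr₂_apply, LinearMap.compl₂Bilin_apply,
        hP.single_single, hS.single_single, hV.single_single, ← single_add, hns, mul_assoc]
  exact DFunLike.congr_fun (LinearMap.congr_fun₂ this x y) z

end

/-- An NS-family algebra `(D, {≺_α, ≻_α, ⋎_{α,β}})` induces an NS-algebra on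
`D ⊗ kΩ` (modelled as `Ω →₀ D`, with `single α x ↔ x ⊗ α`), where
`(x⊗α)≺(y⊗β) = (x ≺_β y)⊗αβ`, `(x⊗α)≻(y⊗β) = (x ≻_α y)⊗αβ`,
`(x⊗α)⋎(y⊗β) = (x ⋎_{α,β} y)⊗αβ`. -/
theorem NS_family_algebra_induces_NS_algebra
    {k Ω D : Type*} [Field k] [Semigroup Ω]
    [AddCommGroup D] [Module k D]
    (p s : Ω → D →ₗ[k] D →ₗ[k] D) (v : Ω → Ω → D →ₗ[k] D →ₗ[k] D)
    (hns1 : ∀ (α β : Ω) (x y z : D),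
      p β (p α x y) z = p (α * β) x (p β y z + s α y z + v α β y z))
    (hns2 : ∀ (α β : Ω) (x y z : D),
      p β (s α x y) z = s α x (p β y z))
    (hns3 : ∀ (α β : Ω) (x y z : D),
      s (α * β) (p β x y + s α x y + v α β x y) z = s α x (s β y z))
    (hns4 : ∀ (α β γ : Ω) (x y z : D),
      v (α * β) γ (p β x y + s α x y + v α β x y) z + p γ (v α β x y) z
        = s α x (v β γ y z) + v α (β * γ) x (p γ y z + s β y z + v β γ y z))
    (P S V : (Ω →₀ D) →ₗ[k] (Ω →₀ D) →ₗ[k] (Ω →₀ D))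
    (hP : ∀ (α β : Ω) (x y : D),
      P (Finsupp.single α x) (Finsupp.single β y) = Finsupp.single (α * β) (p β x y))
    (hS : ∀ (α β : Ω) (x y : D),
      S (Finsupp.single α x) (Finsupp.single β y) = Finsupp.single (α * β) (s α x y))
    (hV : ∀ (α β : Ω) (x y : D),
      V (Finsupp.single α x) (Finsupp.single β y) = Finsupp.single (α * β) (v α β x y)) :
    (∀ x y z : Ω →₀ D, P (P x y) z = P x (P y z + S y z + V y z)) ∧
    (∀ x y z : Ω →₀ D, P (S x y) z = S x (P y z)) ∧
    (∀ x y z : Ω →₀ D, S (P x y + S x y + V x y) z = S x (S y z)) ∧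
    (∀ x y z : Ω →₀ D,
      V (P x y + S x y + V x y) z + P (V x y) z
        = S x (V y z) + V x (P y z + S y z + V y z)) := by
  exact ⟨IsFamilyInduced.ns_prec_prec hP hS hV hns1, IsFamilyInduced.ns_succ_prec hP hS hns2,
    IsFamilyInduced.ns_succ_succ hP hS hV hns3, IsFamilyInduced.ns_curlyvee hP hS hV hns4⟩
end

section
/- Let $A$ be an associative algebra and $\{R_\alpha : A \to A\}_{\alpha\in\Omega}$ a Rota-Baxter family of weight $\lambda$. Then $A$ with operations $a \prec_\alpha b = a\cdot R_\alpha(b)$, $a \succ_\alpha b = R_\alpha(a)\cdot b$, $a \curlyvee_{\alpha,\beta} b = \lambda\, a\cdot b$ is an NS-family algebra. -/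
/-- A Rota-Baxter family of weight `λ` on `A` makes `A` an NS-family algebra
with `a ≺_α b = a·R_α(b)`, `a ≻_α b = R_α(a)·b`, `a ⋎_{α,β} b = λ a·b`. -/
theorem RotaBaxter_family_weight_lambda_gives_NS_family_algebra
    {k Ω A : Type*} [Field k] [Semigroup Ω]
    [NonUnitalRing A] [Module k A] [SMulCommClass k A A] [IsScalarTower k A A]
    (lam : k) (R : Ω → A →ₗ[k] A)
    (hR : ∀ (α β : Ω) (a b : A),
      R α a * R β b = R (α * β) (R α a * b + a * R β b + lam • (a * b))) :
    (∀ (α β : Ω) (x y z : A),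
      (x * R α y) * R β z
        = x * R (α * β) (y * R β z + R α y * z + lam • (y * z))) ∧
    (∀ (α β : Ω) (x y z : A),
      (R α x * y) * R β z = R α x * (y * R β z)) ∧
    (∀ (α β : Ω) (x y z : A),
      R (α * β) (x * R β y + R α x * y + lam • (x * y)) * z
        = R α x * (R β y * z)) ∧
    (∀ (α β γ : Ω) (x y z : A),
      lam • ((x * R β y + R α x * y + lam • (x * y)) * z) + (lam • (x * y)) * R γ z
        = R α x * (lam • (y * z))
          + lam • (x * (y * R γ z + R β y * z + lam • (y * z)))) := by
  refine ⟨fun α β x y z => ?_, fun α β x y z => mul_assoc _ _ _,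
    fun α β x y z => ?_, fun α β γ x y z => ?_⟩
  · rw [mul_assoc, hR]
    abel
  · rw [show x * R β y + R α x * y + lam • (x * y)
        = R α x * y + x * R β y + lam • (x * y) by abel, ← hR, mul_assoc]
  · simp only [add_mul, mul_add, smul_mul_assoc, mul_smul_comm, smul_add, smul_smul, mul_assoc]
    abel
end

section
/- Let $A$ be an associative algebra and $\{N_\alpha : A \to A\}_{\alpha\in\Omega}$ a Nijenhuis family. Then $A$ with the operations $a \prec_\alpha b = a\cdot N_\alpha(b)$, $a \succ_\alpha b = N_\alpha(a)\cdot b$, and $a \curlyvee_{\alpha,\beta} b = -N_{\alpha\beta}(a\cdot b)$ is an NS-family algebra. -/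
/-- A Nijenhuis family `{N_α}` on `A` makes `A` an NS-family algebra with
`a ≺_α b = a·N_α(b)`, `a ≻_α b = N_α(a)·b`, `a ⋎_{α,β} b = -N_{αβ}(a·b)`. -/
theorem Nijenhuis_family_gives_NS_family_algebra
    {k Ω A : Type*} [Field k] [Semigroup Ω]
    [NonUnitalRing A] [Module k A] [SMulCommClass k A A] [IsScalarTower k A A]
    (N : Ω → A →ₗ[k] A)
    (hN : ∀ (α β : Ω) (a b : A),
      N α a * N β b = N (α * β) (N α a * b + a * N β b - N (α * β) (a * b))) :
    (∀ (α β : Ω) (x y z : A),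
      (x * N α y) * N β z
        = x * N (α * β) (y * N β z + N α y * z - N (α * β) (y * z))) ∧
    (∀ (α β : Ω) (x y z : A),
      (N α x * y) * N β z = N α x * (y * N β z)) ∧
    (∀ (α β : Ω) (x y z : A),
      N (α * β) (x * N β y + N α x * y - N (α * β) (x * y)) * z
        = N α x * (N β y * z)) ∧
    (∀ (α β γ : Ω) (x y z : A),
      -(N ((α * β) * γ) ((x * N β y + N α x * y - N (α * β) (x * y)) * z))
          + (-(N (α * β) (x * y))) * N γ z
        = N α x * (-(N (β * γ) (y * z)))
          + (-(N (α * (β * γ)) (x * (y * N γ z + N β y * z - N (β * γ) (y * z)))))) := by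
  refine ⟨?_, ?_, ?_, ?_⟩
  · intro α β x y z
    rw [mul_assoc, hN α β y z]
    congr 2
    abel
  · intro α β x y z
    rw [mul_assoc]
  · intro α β x y z
    rw [← mul_assoc, hN α β x y]
    congr 2
    abel
  · intro α β γ x y z
    simp only [neg_mul, mul_neg, hN (α*β) γ (x*y) z, hN α (β*γ) x (y*z)]
    simp only [mul_assoc, add_mul, sub_mul, mul_add, mul_sub, map_add, map_sub]
    abel
end

section
/- Let $A$ be an associative algebra, $M$ an $A$-bimodule, $H : A\otimes A \to M$ a Hochschild 2-cocycle, and $\{T_\alpha : M \to A\}_{\alpha\in\Omega}$ an $H$-twisted $\mathcal{O}$-operator family. Then $M$ with operations $u \prec_\alpha v = u\cdot T_\alpha(v)$, $u \succ_\alpha v = T_\alpha(u)\cdot v$, $u \curlyvee_{\alpha,\beta} v = H(T_\alpha(u), T_\beta(v))$ is an NS-family algebra. -/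
/-- An `H`-twisted O-operator family `{T_α : M → A}` makes `M` an NS-family
algebra with `u ≺_α v = u·T_α(v)`, `u ≻_α v = T_α(u)·v`, `u ⋎_{α,β} v = H(T_α(u),T_β(v))`. -/
theorem twisted_O_operator_family_gives_NS_family_algebra
    {k Ω A M : Type*} [Field k] [Semigroup Ω]
    [NonUnitalRing A] [Module k A] [SMulCommClass k A A] [IsScalarTower k A A]
    [AddCommGroup M] [Module k M]
    (l : A →ₗ[k] M →ₗ[k] M) (r : M →ₗ[k] A →ₗ[k] M)
    (hll : ∀ (a b : A) (u : M), l (a * b) u = l a (l b u))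
    (hlr : ∀ (a : A) (u : M) (b : A), r (l a u) b = l a (r u b))
    (hrr : ∀ (u : M) (a b : A), r (r u a) b = r u (a * b))
    (H : A →ₗ[k] A →ₗ[k] M)
    (hH : ∀ a b c : A, l a (H b c) - H (a * b) c + H a (b * c) - r (H a b) c = 0)
    (T : Ω → M →ₗ[k] A)
    (hT : ∀ (α β : Ω) (u v : M),
      T α u * T β v
        = T (α * β) (l (T α u) v + r u (T β v) + H (T α u) (T β v))) :
    (∀ (α β : Ω) (x y z : M),
      r (r x (T α y)) (T β z)
        = r x (T (α * β) (r y (T β z) + l (T α y) z + H (T α y) (T β z)))) ∧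
    (∀ (α β : Ω) (x y z : M),
      r (l (T α x) y) (T β z) = l (T α x) (r y (T β z))) ∧
    (∀ (α β : Ω) (x y z : M),
      l (T (α * β) (r x (T β y) + l (T α x) y + H (T α x) (T β y))) z
        = l (T α x) (l (T β y) z)) ∧
    (∀ (α β γ : Ω) (x y z : M),
      H (T (α * β) (r x (T β y) + l (T α x) y + H (T α x) (T β y))) (T γ z)
          + r (H (T α x) (T β y)) (T γ z)
        = l (T α x) (H (T β y) (T γ z))
          + H (T α x) (T (β * γ) (r y (T γ z) + l (T β y) z + H (T β y) (T γ z)))) := by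
  have comm : ∀ (α β : Ω) (x y : M),
      r x (T β y) + l (T α x) y + H (T α x) (T β y)
        = l (T α x) y + r x (T β y) + H (T α x) (T β y) := by
    intros; abel
  refine ⟨?_, ?_, ?_, ?_⟩
  · intro α β x y z
    rw [hrr, comm, ← hT]
  · intro α β x y z
    exact hlr _ _ _
  · intro α β x y z
    rw [comm, ← hT, hll]
  · intro α β γ x y z
    rw [comm α β, ← hT, comm β γ, ← hT]
    have h := hH (T α x) (T β y) (T γ z)
    have h' : l (T α x) (H (T β y) (T γ z)) + H (T α x) (T β y * T γ z)
        - (H (T α x * T β y) (T γ z) + r (H (T α x) (T β y)) (T γ z)) = 0 := by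
      rw [← h]; abel
    exact (sub_eq_zero.mp h').symm
end

section
/- Let $(D, \{\prec_\alpha, \succ_\alpha, \curlyvee_{\alpha,\beta}\}_{\alpha,\beta\in\Omega})$ be an NS-family algebra. Then $D$ with the collection of operations $x \ast_{\alpha,\beta} y = x\prec_\beta y + x\succ_\alpha y + x\curlyvee_{\alpha,\beta} y$ is an $\Omega$-associative algebra, i.e. $(x \ast_{\alpha,\beta} y) \ast_{\alpha\beta,\gamma} z = x \ast_{\alpha,\beta\gamma} (y \ast_{\beta,\gamma} z)$ for all $x,y,z\in D$ and $\alpha,\beta,\gamma\in\Omega$. -/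
/-- An NS-family algebra `(D, {≺_α, ≻_α, ⋎_{α,β}})` yields an Ω-associative
algebra with `x ∗_{α,β} y = x ≺_β y + x ≻_α y + x ⋎_{α,β} y`. -/
theorem NS_family_algebra_gives_Omega_associative_algebra
    {k Ω D : Type*} [Field k] [Semigroup Ω]
    [AddCommGroup D] [Module k D]
    (p s : Ω → D →ₗ[k] D →ₗ[k] D) (v : Ω → Ω → D →ₗ[k] D →ₗ[k] D)
    (hns1 : ∀ (α β : Ω) (x y z : D),
      p β (p α x y) z = p (α * β) x (p β y z + s α y z + v α β y z))
    (hns2 : ∀ (α β : Ω) (x y z : D),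
      p β (s α x y) z = s α x (p β y z))
    (hns3 : ∀ (α β : Ω) (x y z : D),
      s (α * β) (p β x y + s α x y + v α β x y) z = s α x (s β y z))
    (hns4 : ∀ (α β γ : Ω) (x y z : D),
      v (α * β) γ (p β x y + s α x y + v α β x y) z + p γ (v α β x y) z
        = s α x (v β γ y z) + v α (β * γ) x (p γ y z + s β y z + v β γ y z))
    (ast : Ω → Ω → D → D → D)
    (hast : ∀ (α β : Ω) (x y : D), ast α β x y = p β x y + s α x y + v α β x y) :
    ∀ (α β γ : Ω) (x y z : D),
      ast (α * β) γ (ast α β x y) z = ast α (β * γ) x (ast β γ y z) := by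
  intro α β γ x y z
  have h1 := hns1 β γ x y z
  have h2 := hns2 α γ x y z
  have h3 := hns3 α β x y z
  have h4 := hns4 α β γ x y z
  simp only [hast, map_add, LinearMap.add_apply] at *
  linear_combination (norm := abel) h1 + h2 + h3 + h4
end

section
/- Let $A$ be an associative algebra, $M$ an $A$-bimodule, $H$ a Hochschild 2-cocycle, and $\{T_\alpha : M \to A\}_{\alpha\in\Omega}$ an $H$-twisted $\mathcal{O}$-operator family. Equip $M$ with the $\Omega$-associative structure $u \ast_{\alpha,\beta} v = T_\alpha(u)\cdot v + u\cdot T_\beta(v) + H(T_\alpha(u),T_\beta(v))$. Then $A$ with the operations $u \triangleright_{\alpha,\beta} a = T_\alpha(u)\cdot a - T_{\alpha\beta}(u\cdot a) - T_{\alpha\beta}(H(T_\alpha(u), a))$ and $a \triangleleft_{\alpha,\beta} u = a\cdot T_\beta(u) - T_{\alpha\beta}(a\cdot u) - T_{\alpha\beta}(H(a, T_\beta(u)))$ is a bimodule over this $\Omega$-associative algebra; in particular $(u\ast_{\alpha,\beta}v)\triangleright_{\alpha\beta,\gamma}a = u\triangleright_{\alpha,\beta\gamma}(v\triangleright_{\beta,\gamma}a)$,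 $(u\triangleright_{\alpha,\beta}a)\triangleleft_{\alpha\beta,\gamma}v = u\triangleright_{\alpha,\beta\gamma}(a\triangleleft_{\beta,\gamma}v)$, and $(a\triangleleft_{\alpha,\beta}u)\triangleleft_{\alpha\beta,\gamma}v = a\triangleleft_{\alpha,\beta\gamma}(u\ast_{\beta,\gamma}v)$ for all $u,v\in M$, $a\in A$, $\alpha,\beta,\gamma\in\Omega$. -/
/-- For an `H`-twisted O-operator family `{T_α : M → A}`, the algebra `A`
with the actions `▷` and `◁` is a bimodule over the Ω-associative algebra `(M, {∗_{α,β}})`. -/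
theorem twisted_O_operator_family_bimodule_structure
    {k Ω A M : Type*} [Field k] [Semigroup Ω]
    [NonUnitalRing A] [Module k A] [SMulCommClass k A A] [IsScalarTower k A A]
    [AddCommGroup M] [Module k M]
    (l : A →ₗ[k] M →ₗ[k] M) (r : M →ₗ[k] A →ₗ[k] M)
    (hll : ∀ (a b : A) (u : M), l (a * b) u = l a (l b u))
    (hlr : ∀ (a : A) (u : M) (b : A), r (l a u) b = l a (r u b))
    (hrr : ∀ (u : M) (a b : A), r (r u a) b = r u (a * b))
    (H : A →ₗ[k] A →ₗ[k] M)
    (hH : ∀ a b c : A, l a (H b c) - H (a * b) c + H a (b * c) - r (H a b) c = 0)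
    (T : Ω → M →ₗ[k] A)
    (hT : ∀ (α β : Ω) (u v : M),
      T α u * T β v
        = T (α * β) (l (T α u) v + r u (T β v) + H (T α u) (T β v)))
    (ast : Ω → Ω → M → M → M)
    (hast : ∀ (α β : Ω) (u v : M),
      ast α β u v = l (T α u) v + r u (T β v) + H (T α u) (T β v))
    (tr : Ω → Ω → M → A → A)
    (htr : ∀ (α β : Ω) (u : M) (a : A),
      tr α β u a = T α u * a - T (α * β) (r u a) - T (α * β) (H (T α u) a))
    (tl : Ω → Ω → A → M → A)
    (htl : ∀ (α β : Ω) (a : A) (u : M),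
      tl α β a u = a * T β u - T (α * β) (l a u) - T (α * β) (H a (T β u))) :
    (∀ (α β γ : Ω) (u v : M) (a : A),
      tr (α * β) γ (ast α β u v) a = tr α (β * γ) u (tr β γ v a)) ∧
    (∀ (α β γ : Ω) (u v : M) (a : A),
      tl (α * β) γ (tr α β u a) v = tr α (β * γ) u (tl β γ a v)) ∧
    (∀ (α β γ : Ω) (u v : M) (a : A),
      tl (α * β) γ (tl α β a u) v = tl α (β * γ) a (ast β γ u v)) := by
  have hH' : ∀ a b c : A, H (a * b) c = l a (H b c) + H a (b * c) - r (H a b) c := by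
    intro a b c
    have h := hH a b c
    linear_combination (norm := abel) -h
  refine ⟨?_, ?_, ?_⟩
  · intro α β γ u v a
    rw [htr, htr, htr, hast, ← hT α β u v]
    simp only [mul_sub, sub_mul, mul_add, add_mul, map_add, map_sub,
      LinearMap.add_apply, LinearMap.sub_apply]
    rw [mul_assoc, hH' (T α u) (T β v) a, hT α (β * γ) u (r v a),
      hT α (β * γ) u (H (T β v) a)]
    simp only [map_add, map_sub, LinearMap.add_apply, LinearMap.sub_apply,
      hlr, hrr, mul_assoc]
    abel
  · intro α β γ u v a
    rw [htl, htr, htr, htl]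
    simp only [mul_sub, sub_mul, mul_add, add_mul, map_add, map_sub,
      LinearMap.add_apply, LinearMap.sub_apply]
    rw [mul_assoc, hH' (T α u) a (T γ v), hT (α * β) γ (r u a) v,
      hT (α * β) γ (H (T α u) a) v, hT α (β * γ) u (l a v),
      hT α (β * γ) u (H a (T γ v))]
    simp only [map_add, map_sub, LinearMap.add_apply, LinearMap.sub_apply,
      hll, hlr, hrr, mul_assoc]
    abel
  · intro α β γ u v a
    rw [htl, htl, htl, hast, ← hT β γ u v]
    simp only [mul_sub, sub_mul, mul_add, add_mul, map_add, map_sub,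
      LinearMap.add_apply, LinearMap.sub_apply]
    rw [mul_assoc, hH' a (T β u) (T γ v), hT (α * β) γ (l a u) v,
      hT (α * β) γ (H a (T β u)) v]
    simp only [map_add, map_sub, LinearMap.add_apply, LinearMap.sub_apply,
      hll, hlr, hrr, mul_assoc]
    abel
end

section
/- Let $\{S_\alpha : C \to N\}_{\alpha\in\Omega}$ be an $h$-twisted $\mathcal{O}$-operator cofamily on a coassociative coalgebra $(C,\triangle)$ with $C$-cobimodule $N$ and coHochschild 2-cocycle $h : N \to C\otimes C$. Then the dual maps $S_\alpha^{dual} : N^* \to C^*$, $S_\alpha^{dual}(f) = f\circ S_\alpha$, form an $H$-twisted $\mathcal{O}$-operator family over the dual algebra $C^*$, where $H(f,g) = (f\otimes g)\circ h$ (i.e. $H = h^{dual}\circ I_C$). -/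
open TensorProduct

private lemma dualDistrib_comp_map {k A B A' B' : Type*} [Field k]
    [AddCommGroup A] [Module k A] [AddCommGroup B] [Module k B]
    [AddCommGroup A'] [Module k A'] [AddCommGroup B'] [Module k B']
    (f : Module.Dual k A') (g : Module.Dual k B') (u : A →ₗ[k] A') (v : B →ₗ[k] B') :
    (TensorProduct.dualDistrib k A' B' (f ⊗ₜ[k] g)).comp (TensorProduct.map u v)
      = TensorProduct.dualDistrib k A B ((f.comp u) ⊗ₜ[k] (g.comp v)) := by
  apply TensorProduct.ext'
  intro a b
  simp

/-- An `h`-twisted O-operator cofamily `{S_α : C → N}` on a coassociative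
coalgebra `(C, Δ)` with `C`-cobimodule `N` and coHochschild 2-cocycle `h : N → C ⊗ C`
dualizes to an `H`-twisted O-operator family `{S_α^dual : N* → C*}` over the convolution
algebra `C*`, where `H(f,g) = (f ⊗ g) ∘ h`. -/
theorem twisted_O_operator_cofamily_dualizes_to_twisted_O_operator_family
    {k Ω C N : Type*} [Field k] [Semigroup Ω]
    [AddCommGroup C] [Module k C] [AddCommGroup N] [Module k N]
    (Δ : C →ₗ[k] C ⊗[k] C)
    (hcoassoc : (TensorProduct.assoc k C C C).toLinearMap.comp
        ((TensorProduct.map Δ LinearMap.id).comp Δ)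
      = (TensorProduct.map LinearMap.id Δ).comp Δ)
    (Δl : N →ₗ[k] C ⊗[k] N) (Δr : N →ₗ[k] N ⊗[k] C)
    (hcl : (TensorProduct.assoc k C C N).toLinearMap.comp
        ((TensorProduct.map Δ LinearMap.id).comp Δl)
      = (TensorProduct.map LinearMap.id Δl).comp Δl)
    (hclr : (TensorProduct.assoc k C N C).toLinearMap.comp
        ((TensorProduct.map Δl LinearMap.id).comp Δr)
      = (TensorProduct.map LinearMap.id Δr).comp Δl)
    (hcr : (TensorProduct.assoc k N C C).toLinearMap.comp
        ((TensorProduct.map Δr LinearMap.id).comp Δr)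
      = (TensorProduct.map LinearMap.id Δ).comp Δr)
    (h : N →ₗ[k] C ⊗[k] C)
    (hcocycle : (TensorProduct.map LinearMap.id h).comp Δl
        - (TensorProduct.assoc k C C C).toLinearMap.comp
            ((TensorProduct.map Δ LinearMap.id).comp h)
        + (TensorProduct.map LinearMap.id Δ).comp h
        - (TensorProduct.assoc k C C C).toLinearMap.comp
            ((TensorProduct.map h LinearMap.id).comp Δr) = 0)
    (S : Ω → C →ₗ[k] N)
    (hS : ∀ α β : Ω,
      (TensorProduct.map (S α) (S β)).comp Δ
        = ((TensorProduct.map (S α) LinearMap.id).comp Δl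
            + (TensorProduct.map LinearMap.id (S β)).comp Δr
            + (TensorProduct.map (S α) (S β)).comp h).comp (S (α * β))) :
    ∀ (α β : Ω) (f g : Module.Dual k N),
      ((TensorProduct.dualDistrib k C C) ((f.comp (S α)) ⊗ₜ[k] (g.comp (S β)))).comp Δ
        = (((TensorProduct.dualDistrib k C N) ((f.comp (S α)) ⊗ₜ[k] g)).comp Δl
            + ((TensorProduct.dualDistrib k N C) (f ⊗ₜ[k] (g.comp (S β)))).comp Δr
            + ((TensorProduct.dualDistrib k C C)
                ((f.comp (S α)) ⊗ₜ[k] (g.comp (S β)))).comp h).comp (S (α * β)) := by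
  intro α β f g
  have e1 : TensorProduct.dualDistrib k C C ((f.comp (S α)) ⊗ₜ[k] (g.comp (S β)))
      = (TensorProduct.dualDistrib k N N (f ⊗ₜ[k] g)).comp (TensorProduct.map (S α) (S β)) :=
    (dualDistrib_comp_map f g (S α) (S β)).symm
  have e2 : TensorProduct.dualDistrib k C N ((f.comp (S α)) ⊗ₜ[k] g)
      = (TensorProduct.dualDistrib k N N (f ⊗ₜ[k] g)).comp
          (TensorProduct.map (S α) LinearMap.id) := by
    rw [dualDistrib_comp_map]; rfl
  have e3 : TensorProduct.dualDistrib k N C (f ⊗ₜ[k] (g.comp (S β)))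
      = (TensorProduct.dualDistrib k N N (f ⊗ₜ[k] g)).comp
          (TensorProduct.map LinearMap.id (S β)) := by
    rw [dualDistrib_comp_map]; rfl
  rw [e1, e2, e3, LinearMap.comp_assoc, hS α β]
  simp only [LinearMap.add_comp, LinearMap.comp_add, LinearMap.comp_assoc]
end
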